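/- arXiv:0912.1284 — 3 statements merged into one kernel-verified Lean document; each statement's English description precedes it below -/
import Mathlib

section
/- Let S be a monoid, G a subgroup of S with identity e, and let C = Gs be a right coset of G (so there exists s' with Gss' = G). Then for all g in G, g·s·s' = g, i.e., right multiplication by ss' restricted to G is the identity map. -/
/-!
Since `e · ss'` lies in `Gss' = G`, it has an inverse `u` in `G`, and because `g = g e` on `G`,
right multiplication by `u` undoes right multiplication by `ss'` on `G`. This gives injectivity,
hence bijectivity onto `Gss' = G`, and `s'' = s' u` is the required representative.
-/

theorem mul_mul_eq_self_of_mul_eq_self {S : Type*} [Monoid S] {g e x u : S}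
    (hge : g * e = g) (hu : e * x * u = e) : g * x * u = g :=
  calc g * x * u = g * e * x * u := by rw [hge]
    _ = g * (e * x * u) := by simp only [mul_assoc]
    _ = g := by rw [hu, hge]

theorem coset_representative_fixes_subgroup_general {S : Type*} [Monoid S] (G : Set S) (e : S)
    (heG : e ∈ G)
    (hid : ∀ g ∈ G, e * g = g ∧ g * e = g)
    (hinv : ∀ g ∈ G, ∃ h ∈ G, g * h = e ∧ h * g = e)
    (s s' : S)
    (hcoset : (fun g => g * (s * s')) '' G = G) :
    Set.BijOn (fun g => g * (s * s')) G G ∧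
      ∃ s'' : S, ∀ g ∈ G, g * s * s'' = g := by
  have he_mem : e * (s * s') ∈ G := hcoset ▸ Set.mem_image_of_mem _ heG
  obtain ⟨u, -, hu, -⟩ := hinv _ he_mem
  have hfix : Set.LeftInvOn (· * u) (· * (s * s')) G := fun g hg =>
    mul_mul_eq_self_of_mul_eq_self (hid g hg).2 hu
  refine ⟨?_, s' * u, fun g hg => ?_⟩
  · have hbij := hfix.injOn.bijOn_image
    rwa [hcoset] at hbij
  · calc g * s * (s' * u) = g * (s * s') * u := by simp only [mul_assoc]
      _ = g := hfix hg

/-- If `Gs` is a right coset of a subgroup `G` of a monoid `S`,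
witnessed by `s'` with `Gss' = G`, then right multiplication by `ss'` is a
bijection of `G`, and a representative `s''` can be chosen so that
`g s s'' = g` for all `g ∈ G`. -/
theorem coset_representative_fixes_subgroup {S : Type*} [Monoid S] (G : Set S) (e : S)
    (hmul : ∀ a ∈ G, ∀ b ∈ G, a * b ∈ G)
    (heG : e ∈ G) (hee : e * e = e)
    (hid : ∀ g ∈ G, e * g = g ∧ g * e = g)
    (hinv : ∀ g ∈ G, ∃ h ∈ G, g * h = e ∧ h * g = e)
    (s s' : S)
    (hcoset : (fun g => g * (s * s')) '' G = G) :
    Set.BijOn (fun g => g * (s * s')) G G ∧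
      ∃ s'' : S, ∀ g ∈ G, g * s * s'' = g :=
  coset_representative_fixes_subgroup_general G e heG hid hinv s s' hcoset
end

section
/- Let S be a monoid and H a maximal subgroup of S (an H-class containing an idempotent). Then the right cosets of H (sets Hs with Hss' = H for some s') are precisely the H-classes of S contained in the R-class of H. In particular, H has finite translational index if and only if the R-class of H contains finitely many H-classes. -/
/-- Green's R relation on a monoid: `x R y ↔ xS = yS`. -/
def GreenR {S : Type*} [Monoid S] (x y : S) : Prop :=
  (∃ u, x * u = y) ∧ (∃ v, y * v = x)

/-- Green's L relation on a monoid: `x L y ↔ Sx = Sy`. -/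
def GreenL {S : Type*} [Monoid S] (x y : S) : Prop :=
  (∃ u, u * x = y) ∧ (∃ v, v * y = x)

/-- Green's H relation. -/
def GreenH {S : Type*} [Monoid S] (x y : S) : Prop :=
  GreenR x y ∧ GreenL x y

/-!
Every element `h` of the maximal subgroup `H = H_e` satisfies `h * e = h`, so a coset `H s` equals
`H (e s)`, and `H (s s') = H` puts `e s s'` in `H`, whence `e s R e`. Conversely, by Green's lemma
right multiplication by any `x` with `e R x` maps `H_e` onto `H_x`, and if `x v = e` then
`H x v = H e = H`, so `H_x = H x` is a coset.
-/

section GreenRelations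

variable {S : Type*} [Monoid S] {e h x y : S}

theorem greenH_refl (x : S) : GreenH x x :=
  ⟨⟨⟨1, mul_one x⟩, ⟨1, mul_one x⟩⟩, ⟨1, one_mul x⟩, ⟨1, one_mul x⟩⟩

theorem IsIdempotentElem.mul_eq_of_greenR (he : IsIdempotentElem e) (hx : GreenR e x) :
    e * x = x := by
  obtain ⟨⟨u, rfl⟩, -⟩ := hx
  rw [← mul_assoc, he.eq]

theorem IsIdempotentElem.mul_eq_of_greenL (he : IsIdempotentElem e) (hx : GreenL e x) :
    x * e = x := by
  obtain ⟨⟨u, rfl⟩, -⟩ := hx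
  rw [mul_assoc, he.eq]

theorem IsIdempotentElem.greenH_mul_of_greenR (he : IsIdempotentElem e) (hh : GreenH e h)
    (hx : GreenR e x) : GreenH x (h * x) := by
  have hex : e * x = x := he.mul_eq_of_greenR hx
  have hhe : h * e = h := he.mul_eq_of_greenL hh.2
  obtain ⟨⟨⟨u, hu⟩, ⟨p, hp⟩⟩, -, ⟨w, hw⟩⟩ := hh
  obtain ⟨-, ⟨v, hv⟩⟩ := hx
  refine ⟨⟨⟨v * u * x, ?_⟩, ⟨v * p * x, ?_⟩⟩, ⟨h, rfl⟩, ⟨w, ?_⟩⟩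
  · simp only [← mul_assoc, hv, hu]
  · calc h * x * (v * p * x) = h * (x * v) * p * x := by simp only [mul_assoc]
      _ = x := by rw [hv, hhe, hp, hex]
  · rw [← mul_assoc, hw, hex]

theorem IsIdempotentElem.exists_greenH_mul_eq_of_greenH (he : IsIdempotentElem e)
    (hx : GreenR e x) (hy : GreenH x y) : ∃ h, GreenH e h ∧ h * x = y := by
  have hex : e * x = x := he.mul_eq_of_greenR hx
  obtain ⟨-, ⟨v, hv⟩⟩ := hx
  -- `y` becomes `x * c`; the element of `H_e` sent to `y` is `y * v`, where `x * v = e`.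
  obtain ⟨⟨⟨c, rfl⟩, ⟨d, hd⟩⟩, ⟨a, ha⟩, ⟨b, hb⟩⟩ := hy
  have hyvx : x * c * v * x = x * c := by
    calc x * c * v * x = a * (x * v) * x := by rw [← ha]; simp only [mul_assoc]
      _ = x * c := by rw [hv, mul_assoc, hex, ha]
  have hey : e * (x * c * v) = x * c * v := by rw [← mul_assoc, ← mul_assoc, hex]
  refine ⟨x * c * v, ⟨⟨⟨x * c * v, hey⟩, ⟨x * d * v, ?_⟩⟩, ⟨x * c * v, ?_⟩, ⟨b, ?_⟩⟩, hyvx⟩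
  · calc x * c * v * (x * d * v) = x * c * v * x * d * v := by simp only [mul_assoc]
      _ = e := by rw [hyvx, hd, hv]
  · rw [← hv, ← mul_assoc, hyvx]
  · rw [← mul_assoc, hb, hv]

/-- Green's lemma for the R-class of an idempotent. -/
theorem IsIdempotentElem.setOf_greenH_eq_image_mul (he : IsIdempotentElem e) (hx : GreenR e x) :
    {y | GreenH x y} = (fun g => g * x) '' {z | GreenH e z} := by
  ext y
  constructor
  · exact he.exists_greenH_mul_eq_of_greenH hx
  · rintro ⟨h, hh, rfl⟩
    exact he.greenH_mul_of_greenR hh hx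

theorem IsIdempotentElem.image_mul_self_setOf_greenH (he : IsIdempotentElem e) :
    (fun g => g * e) '' {z | GreenH e z} = {z | GreenH e z} :=
  (Set.image_congr fun _ hh => he.mul_eq_of_greenL hh.2).trans (Set.image_id' _)

theorem IsIdempotentElem.image_mul_idem_mul (he : IsIdempotentElem e) (s : S) :
    (fun g => g * (e * s)) '' {z | GreenH e z} = (fun g => g * s) '' {z | GreenH e z} :=
  Set.image_congr fun _ hh => by rw [← mul_assoc, he.mul_eq_of_greenL hh.2]

theorem greenR_mul_of_image_mul_eq {s s' : S}
    (hss' : (fun g => g * (s * s')) '' {z | GreenH e z} = {z | GreenH e z}) :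
    GreenR e (e * s) := by
  have hmem : e * (s * s') ∈ (fun g => g * (s * s')) '' {z | GreenH e z} :=
    Set.mem_image_of_mem _ (greenH_refl e)
  rw [hss'] at hmem
  obtain ⟨⟨-, p, hp⟩, -⟩ := hmem
  exact ⟨⟨s, rfl⟩, s' * p, by simpa only [mul_assoc] using hp⟩

theorem IsIdempotentElem.rightCosets_eq_greenHClasses_in_greenRClass (he : IsIdempotentElem e) :
    {C : Set S | ∃ s s' : S, C = (fun g => g * s) '' {z | GreenH e z} ∧
        (fun g => g * (s * s')) '' {z | GreenH e z} = {z | GreenH e z}} =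
      {C : Set S | ∃ x : S, GreenR e x ∧ C = {y | GreenH x y}} := by
  ext C
  constructor
  · rintro ⟨s, s', rfl, hss'⟩
    have hR : GreenR e (e * s) := greenR_mul_of_image_mul_eq hss'
    exact ⟨e * s, hR, by rw [he.setOf_greenH_eq_image_mul hR, he.image_mul_idem_mul]⟩
  · rintro ⟨x, hx, rfl⟩
    obtain ⟨v, hv⟩ := hx.2
    exact ⟨x, v, he.setOf_greenH_eq_image_mul hx, by rw [hv, he.image_mul_self_setOf_greenH]⟩

end GreenRelations

/-- For a maximal subgroup `H` of a monoid `S` (the H-class of an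
idempotent `e`), the right cosets of `H` are precisely the H-classes of `S`
contained in the R-class of `H`; in particular `H` has finite translational
index iff the R-class of `H` contains finitely many H-classes. -/
theorem cosets_of_maximal_subgroup_are_Hclasses {S : Type*} [Monoid S]
    (e : S) (hee : e * e = e) (H : Set S) (hH : H = {x | GreenH e x}) :
    {C : Set S | ∃ s s' : S, C = (fun g => g * s) '' H ∧
        (fun g => g * (s * s')) '' H = H} =
      {C : Set S | ∃ x : S, GreenR e x ∧ C = {y | GreenH x y}} ∧
    ({C : Set S | ∃ s s' : S, C = (fun g => g * s) '' H ∧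
        (fun g => g * (s * s')) '' H = H}.Finite ↔
      {C : Set S | ∃ x : S, GreenR e x ∧ C = {y | GreenH x y}}.Finite) := by
  subst hH
  have hcosets := IsIdempotentElem.rightCosets_eq_greenHClasses_in_greenRClass hee
  exact ⟨hcosets, by rw [hcosets]⟩
end

section
/- Let S be a monoid, G a subgroup of S, and consider the action of S on the set of right cosets C = {C_i : i ∈ I} ∪ {C₀} given by C_i · s = C_i s if C_i s is again a coset, and C₀ otherwise, with C₀ absorbing. Then this defines a monoid action: C · 1 = C for all C, and (C · s) · t = C · (st) for all s, t ∈ S. -/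
/-- `C` is a right coset of the subgroup `G` of a monoid `S`: `C = Gs` for
some `s` with `Gss' = G` for some `s'`. -/
def IsCosetOf {S : Type*} [Monoid S] (G : Set S) (C : Set S) : Prop :=
  ∃ s s' : S, C = (fun g => g * s) '' G ∧ (fun g => g * (s * s')) '' G = G

open scoped Classical in
/-- The action of `S` on the right cosets of `G` together with an absorbing
point `C₀` (modelled as `none`): `C · s = Cs` if `Cs` is a coset, else `C₀`. -/
noncomputable def cosetAct {S : Type*} [Monoid S] (G : Set S) :
    Option (Set S) → S → Option (Set S) := fun o s =>
  match o with
  | none => none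
  | some C =>
    if IsCosetOf G ((fun g => g * s) '' C) then some ((fun g => g * s) '' C)
    else none

/-! Right multiplication composes, `(Cs)t = C(st)`, so the only point is that `C₀` is reached in
one step `st` whenever it is reached in two steps `s`, `t`. A coset cannot leave the cosets and
come back: if `Gu·t = Gv` with `Gvv' = G`, then `Gu·(tv') = G`, so `Gu` is already a coset. -/

section

variable {S : Type*} [Monoid S]

lemma image_mul_right_image_mul_right (X : Set S) (a b : S) :
    (· * b) '' ((· * a) '' X) = (· * (a * b)) '' X := by
  simp only [Set.image_image, mul_assoc]

lemma IsCosetOf.of_image_mul_right {G : Set S} {u t : S}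
    (h : IsCosetOf G ((· * t) '' ((· * u) '' G))) : IsCosetOf G ((· * u) '' G) := by
  obtain ⟨v, v', hv, hvv'⟩ := h
  refine ⟨u, t * v', rfl, ?_⟩
  calc (· * (u * (t * v'))) '' G
      = (· * v') '' ((· * t) '' ((· * u) '' G)) := by
        simp only [image_mul_right_image_mul_right, mul_assoc]
    _ = G := by rw [hv, image_mul_right_image_mul_right, hvv']

lemma cosetAct_some_one {G C : Set S} (hC : IsCosetOf G C) : cosetAct G (some C) 1 = some C := by
  simp [cosetAct, hC]

lemma cosetAct_cosetAct_some {G C : Set S} (hC : IsCosetOf G C) (s t : S) :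
    cosetAct G (cosetAct G (some C) s) t = cosetAct G (some C) (s * t) := by
  by_cases hs : IsCosetOf G ((· * s) '' C)
  · simp only [cosetAct, if_pos hs]
    rw [image_mul_right_image_mul_right]
  · obtain ⟨u, -, rfl, -⟩ := hC
    have hst : ¬IsCosetOf G ((· * (s * t)) '' ((· * u) '' G)) := by
      rw [image_mul_right_image_mul_right] at hs ⊢
      rw [← mul_assoc, ← image_mul_right_image_mul_right]
      exact fun h => hs h.of_image_mul_right
    simp only [cosetAct, if_neg hs, if_neg hst]

end

theorem cosetAct_is_monoid_action_general {S : Type*} [Monoid S] (G : Set S) :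
    (∀ o : Option (Set S), (o = none ∨ ∃ C : Set S, o = some C ∧ IsCosetOf G C) →
      cosetAct G o 1 = o) ∧
    (∀ o : Option (Set S), (o = none ∨ ∃ C : Set S, o = some C ∧ IsCosetOf G C) →
      ∀ s t : S, cosetAct G (cosetAct G o s) t = cosetAct G o (s * t)) := by
  constructor
  · rintro o (rfl | ⟨C, rfl, hC⟩)
    · rfl
    · exact cosetAct_some_one hC
  · rintro o (rfl | ⟨C, rfl, hC⟩) s t
    · rfl
    · exact cosetAct_cosetAct_some hC s t

/-- The above defines a monoid action on `{cosets of G} ∪ {C₀}`: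
`C · 1 = C` and `(C · s) · t = C · (st)`. -/
theorem cosetAct_is_monoid_action {S : Type*} [Monoid S] (G : Set S) (e : S)
    (hmul : ∀ a ∈ G, ∀ b ∈ G, a * b ∈ G)
    (heG : e ∈ G) (hee : e * e = e)
    (hid : ∀ g ∈ G, e * g = g ∧ g * e = g)
    (hinv : ∀ g ∈ G, ∃ h ∈ G, g * h = e ∧ h * g = e) :
    (∀ o : Option (Set S), (o = none ∨ ∃ C : Set S, o = some C ∧ IsCosetOf G C) →
      cosetAct G o 1 = o) ∧
    (∀ o : Option (Set S), (o = none ∨ ∃ C : Set S, o = some C ∧ IsCosetOf G C) →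
      ∀ s t : S, cosetAct G (cosetAct G o s) t = cosetAct G o (s * t)) :=
  cosetAct_is_monoid_action_general G
end
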